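/- arXiv:1503.06976 — 3 statements merged into one kernel-verified Lean document; each statement's English description precedes it below -/
import Mathlib

section
/- Chen's shuffle identity for iterated integrals: if for each letter a ∈ A, λ_a : ℝ → ℂ is continuous, and the iterated-integral coefficients are defined by α_{a₁}(t) = ∫₀ᵗ λ_{a₁}(t₁) dt₁ and α_{a₁⋯aₙ}(t) = ∫₀ᵗ λ_{aₙ}(tₙ) α_{a₁⋯a_{n-1}}(tₙ) dtₙ for n > 1, together with α_∅(t) = 1, then for every t the family α(t) satisfies the shuffle relations: α_w(t) α_{w'}(t) = Σⱼ α_{wⱼ}(t) whenever w ⧢ w' = Σⱼ wⱼ. -/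
/-- The shuffle product of two words: the multiset of all order-preserving
interleavings of the two words. -/
def shuffle {A : Type*} : List A → List A → Multiset (List A)
  | [], w' => {w'}
  | w, [] => {w}
  | a :: w, b :: w' =>
      (shuffle w (b :: w')).map (a :: ·) + (shuffle (a :: w) w').map (b :: ·)

/-- `γ ∈ ℂ^𝒲` satisfies the shuffle relations. -/
def IsShuffleChar {A : Type*} (γ : List A → ℂ) : Prop :=
  γ [] = 1 ∧ ∀ w w' : List A, γ w * γ w' = ((shuffle w w').map γ).sum

/-- Iterated integral coefficients for the reversed word: `chenAux [aₙ,…,a₁] t`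
is `α_{a₁⋯aₙ}(t)`, defined by `α_∅ = 1`,
`α_{a₁⋯aₙ}(t) = ∫₀ᵗ λ_{aₙ}(s) α_{a₁⋯a_{n-1}}(s) ds`. -/
noncomputable def chenAux {A : Type*} (lam : A → ℝ → ℂ) : List A → ℝ → ℂ
  | [], _ => 1
  | a :: w, t => ∫ s in (0 : ℝ)..t, lam a s * chenAux lam w s

/-- The iterated-integral coefficient `α_w(t)` of the word `w`. -/
noncomputable def chenCoeff {A : Type*} (lam : A → ℝ → ℂ) (w : List A) (t : ℝ) : ℂ :=
  chenAux lam w.reverse t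

/-! Write `α_w' = λ_a α_u` for `w = u a`, with `α_w(0) = 0` for nonempty `w`. For nonempty `u a`
and `v b`, both `α_{ua} α_{vb}` and the sum of `α` over `ua ⧢ vb` vanish at `0`. By the Leibniz
rule and the recursion `ua ⧢ vb = (u ⧢ vb) a + (ua ⧢ v) b` on last letters, their derivatives are
`λ_a (α_u α_{vb}) + λ_b (α_{ua} α_v)` once the identity holds for shorter words, so they agree. -/

section Shuffle

variable {A : Type*}

@[simp]
lemma shuffle_nil_left (w : List A) : shuffle [] w = {w} := by simp [shuffle]

@[simp]
lemma shuffle_nil_right (w : List A) : shuffle w [] = {w} := by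
  cases w <;> simp [shuffle]

lemma shuffle_cons_cons (a b : A) (w w' : List A) : shuffle (a :: w) (b :: w') =
    (shuffle w (b :: w')).map (a :: ·) + (shuffle (a :: w) w').map (b :: ·) := by
  simp [shuffle]

lemma shuffle_append_singleton_append_singleton (a b : A) (x y : List A) :
    shuffle (x ++ [a]) (y ++ [b]) =
      (shuffle x (y ++ [b])).map (· ++ [a]) + (shuffle (x ++ [a]) y).map (· ++ [b]) := by
  induction x generalizing y with
  | nil =>
    induction y with
    | nil => simp [shuffle, add_comm]
    | cons c y ihy =>
      simp only [List.nil_append, List.cons_append, shuffle_cons_cons] at ihy ⊢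
      simp [ihy, Multiset.map_map]
      exact Multiset.cons_swap _ _ _
  | cons p x ihx =>
    induction y with
    | nil =>
      have := ihx []
      simp only [List.nil_append, List.cons_append, shuffle_cons_cons] at this ⊢
      simp [this, Multiset.map_map, add_right_comm]
    | cons c y ihy =>
      have := ihx (c :: y)
      simp only [List.cons_append, shuffle_cons_cons, Multiset.map_add,
        Multiset.map_map, Function.comp_def] at this ihy ⊢
      rw [this, ihy]
      simp only [Multiset.map_add, Multiset.map_map, Function.comp_def]
      abel

lemma map_reverse_shuffle (u v : List A) :
    (shuffle u v).map List.reverse = shuffle u.reverse v.reverse := by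
  induction u generalizing v with
  | nil => simp
  | cons a u ihu =>
    induction v with
    | nil => simp
    | cons b v ihv =>
      rw [shuffle_cons_cons, List.reverse_cons, List.reverse_cons,
        shuffle_append_singleton_append_singleton, ← List.reverse_cons, ← ihu,
        ← List.reverse_cons, ← ihv]
      simp [Multiset.map_map]

end Shuffle

theorem HasDerivAt.multisetSum {ι 𝕜 F : Type*} [NontriviallyNormedField 𝕜]
    [NormedAddCommGroup F] [NormedSpace 𝕜 F] {s : Multiset ι} {f : ι → 𝕜 → F} {f' : ι → F}
    {x : 𝕜} (h : ∀ i ∈ s, HasDerivAt (f i) (f' i) x) :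
    HasDerivAt (fun y => (s.map (f · y)).sum) (s.map f').sum x := by
  induction s using Multiset.induction_on with
  | empty => simpa using hasDerivAt_const x (0 : F)
  | cons i s ih =>
    simpa using (h i (Multiset.mem_cons_self i s)).fun_add
      (ih fun j hj => h j (Multiset.mem_cons_of_mem hj))

theorem eq_of_hasDerivAt_eq {E : Type*} [NormedAddCommGroup E] [NormedSpace ℝ E]
    {f g f' : ℝ → E} (hf : ∀ x, HasDerivAt f (f' x) x) (hg : ∀ x, HasDerivAt g (f' x) x)
    (x₀ : ℝ) (h : f x₀ = g x₀) : f = g :=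
  eq_of_fderiv_eq (fun x => (hf x).differentiableAt) (fun x => (hg x).differentiableAt)
    (fun x => by rw [(hf x).hasFDerivAt.fderiv, (hg x).hasFDerivAt.fderiv]) x₀ h

section Chen

variable {A : Type*} {lam : A → ℝ → ℂ}

theorem continuous_chenAux (hcont : ∀ a, Continuous (lam a)) (w : List A) :
    Continuous (chenAux lam w) := by
  induction w with
  | nil => exact continuous_const
  | cons a w ih =>
    exact intervalIntegral.continuous_primitive
      (fun _ _ => ((hcont a).mul ih).intervalIntegrable _ _) 0

theorem hasDerivAt_chenAux_cons (hcont : ∀ a, Continuous (lam a)) (a : A) (w : List A)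
    (x : ℝ) : HasDerivAt (chenAux lam (a :: w)) (lam a x * chenAux lam w x) x :=
  ((hcont a).mul (continuous_chenAux hcont w)).integral_hasStrictDerivAt 0 x |>.hasDerivAt

theorem hasDerivAt_sum_chenAux_cons (hcont : ∀ a, Continuous (lam a)) (a : A)
    (s : Multiset (List A)) (x : ℝ) :
    HasDerivAt (fun y => (s.map fun w => chenAux lam (a :: w) y).sum)
      (lam a x * (s.map (chenAux lam · x)).sum) x := by
  rw [← Multiset.sum_map_mul_left]
  exact HasDerivAt.multisetSum fun w _ => hasDerivAt_chenAux_cons hcont a w x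

theorem chenAux_mul_chenAux (hcont : ∀ a, Continuous (lam a)) (u v : List A) (t : ℝ) :
    chenAux lam u t * chenAux lam v t = ((shuffle u v).map (chenAux lam · t)).sum := by
  induction u generalizing v t with
  | nil => simp [chenAux]
  | cons a u ihu =>
    induction v generalizing t with
    | nil => simp [chenAux]
    | cons b v ihv =>
      let D x := lam a x * (chenAux lam u x * chenAux lam (b :: v) x) +
        lam b x * (chenAux lam (a :: u) x * chenAux lam v x)
      have hprod : ∀ x, HasDerivAt (fun y => chenAux lam (a :: u) y * chenAux lam (b :: v) y)
          (D x) x := fun x =>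
        ((hasDerivAt_chenAux_cons hcont a u x).mul
          (hasDerivAt_chenAux_cons hcont b v x)).congr_deriv (by ring)
      have hsum : ∀ x, HasDerivAt (fun y => ((shuffle (a :: u) (b :: v)).map
          (chenAux lam · y)).sum) (D x) x := fun x => by
        simp only [shuffle_cons_cons, Multiset.map_add, Multiset.map_map, Function.comp_def,
          Multiset.sum_add, D, ihu, ihv]
        exact (hasDerivAt_sum_chenAux_cons hcont a _ x).add
          (hasDerivAt_sum_chenAux_cons hcont b _ x)
      refine congrFun (eq_of_hasDerivAt_eq hprod hsum 0 ?_) t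
      simp [chenAux, shuffle_cons_cons, Multiset.map_map, Function.comp_def]

end Chen

/-- Chen's shuffle identity for iterated integrals. -/
theorem chen_shuffle_identity {A : Type*} (lam : A → ℝ → ℂ)
    (hcont : ∀ a : A, Continuous (lam a)) (t : ℝ) :
    IsShuffleChar (fun w => chenCoeff lam w t) := by
  refine ⟨rfl, fun w w' => ?_⟩
  unfold chenCoeff
  rw [chenAux_mul_chenAux hcont, ← map_reverse_shuffle, Multiset.map_map]
  rfl
end

section
/- First-order modified equation for Euler's method: let f : ℝ^D → ℝ^D be smooth (C³), and let f̃_h(x) = f(x) − (h/2) ∂_x f(x)[f(x)]. If φ̃^h denotes the time-h flow of dx/dt = f̃_h(x) (with h treated as a fixed parameter), then for each x, ‖φ̃ʰ(x) − (x + h f(x))‖ = O(h³) as h → 0. -/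
/-! Write `u(t)` for the flow of `f̃_h` started at `x`. Then `u' = f̃_h(u)` and
`u'' = G(h, u)` with `G(h, y) = ∂f̃_h(y)[f̃_h(y)]`, which is `C¹` jointly in `(h, y)` because
`f` is `C³`. For `|t| ≤ |h|` small the flow stays in a fixed ball around `x`, where `G` is
Lipschitz, so a second-order Taylor expansion gives `u(h) = x + h f̃_h(x) + (h²/2) G(0, x) + O(h³)`.
Since `G(0, x) = f'(x)[f(x)]` and `h f̃_h(x) = h f(x) - (h²/2) f'(x)[f(x)]`, the second-order
terms cancel. -/

open Asymptotics Set Metric Filter Topology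

section FlowEstimates

variable {E : Type*} [NormedAddCommGroup E] [NormedSpace ℝ E]

lemma norm_sub_le_mul_of_hasDerivAt_of_nonneg {g : E → E} {w : ℝ → E} {x : E} {M r t : ℝ}
    (hw0 : w 0 = x) (hw : ∀ s, HasDerivAt w (g (w s)) s)
    (hg : ∀ y ∈ closedBall x r, ‖g y‖ < M) (hM : 0 ≤ M) (ht : 0 ≤ t)
    (htr : M * t ≤ r) : ‖w t - x‖ ≤ M * t := by
  refine image_norm_le_of_norm_deriv_right_lt_deriv_boundary
    (f := fun s => w s - x) (B := fun s => M * s) (B' := fun _ => M)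
    (fun s _ => ((hw s).sub_const x).continuousAt.continuousWithinAt)
    (fun s _ => ((hw s).sub_const x).hasDerivWithinAt) (by simp [hw0])
    (fun s => by simpa using (hasDerivAt_id s).const_mul M) ?_ ⟨ht, le_rfl⟩
  intro s hs hs_eq
  apply hg
  rw [mem_closedBall_iff_norm, hs_eq]
  exact (mul_le_mul_of_nonneg_left hs.2.le hM).trans htr

lemma norm_sub_le_mul_abs_of_hasDerivAt {g : E → E} {w : ℝ → E} {x : E} {M r t : ℝ}
    (hw0 : w 0 = x) (hw : ∀ s, HasDerivAt w (g (w s)) s)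
    (hg : ∀ y ∈ closedBall x r, ‖g y‖ < M) (hM : 0 ≤ M) (htr : M * |t| ≤ r) :
    ‖w t - x‖ ≤ M * |t| := by
  rcases le_total 0 t with ht | ht
  · rw [abs_of_nonneg ht] at htr ⊢
    exact norm_sub_le_mul_of_hasDerivAt_of_nonneg hw0 hw hg hM ht htr
  · rw [abs_of_nonpos ht] at htr ⊢
    have hw_rev : ∀ s, HasDerivAt (fun s => w (-s)) (-g (w (-s))) s := fun s => by
      simpa [Function.comp_def] using (hw (-s)).scomp s (hasDerivAt_neg s)
    simpa using norm_sub_le_mul_of_hasDerivAt_of_nonneg (g := fun y => -g y) (t := -t)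
      (by simpa using hw0) hw_rev (by simpa using hg) hM (neg_nonneg.2 ht) htr

lemma norm_le_mul_abs_of_hasDerivAt {v v' : ℝ → E} {C t : ℝ} (hv0 : v 0 = 0)
    (hv : ∀ s, HasDerivAt v (v' s) s) (hbound : ∀ s, |s| ≤ |t| → ‖v' s‖ ≤ C) :
    ‖v t‖ ≤ C * |t| := by
  simpa [hv0, Real.norm_eq_abs] using
    (convex_closedBall (0 : ℝ) |t|).norm_image_sub_le_of_norm_hasDerivWithin_le
      (fun s _ => (hv s).hasDerivWithinAt) (fun s hs => hbound s (by simpa using hs))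
      (mem_closedBall_self (abs_nonneg t)) (by simp)

lemma norm_sub_second_order_taylor_le {u u' u'' : ℝ → E} {a : E} {C t : ℝ}
    (hu : ∀ s, HasDerivAt u (u' s) s) (hu' : ∀ s, HasDerivAt u' (u'' s) s)
    (hbound : ∀ s, |s| ≤ |t| → ‖u'' s - a‖ ≤ C) :
    ‖u t - u 0 - t • u' 0 - (t ^ 2 / 2) • a‖ ≤ C * t ^ 2 := by
  have hC : 0 ≤ C := (norm_nonneg _).trans (hbound 0 (by simp))
  have h_lin : ∀ (b : E) (s : ℝ), HasDerivAt (fun s : ℝ => s • b) b s := fun b s => by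
    simpa using (hasDerivAt_id s).smul_const b
  have h_sq : ∀ s : ℝ, HasDerivAt (fun s : ℝ => (s ^ 2 / 2) • a) (s • a) s := fun s => by
    simpa using ((hasDerivAt_pow 2 s).div_const 2).smul_const a
  have first_order : ∀ s, |s| ≤ |t| → ‖u' s - u' 0 - s • a‖ ≤ C * |t| := fun s hs =>
    (norm_le_mul_abs_of_hasDerivAt (v := fun s => u' s - u' 0 - s • a) (by simp)
      (fun s => ((hu' s).sub_const (u' 0)).sub (h_lin a s))
      (fun r hr => hbound r (hr.trans hs))).trans (by gcongr)
  calc _ ≤ C * |t| * |t| :=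
        norm_le_mul_abs_of_hasDerivAt (v := fun s => u s - u 0 - s • u' 0 - (s ^ 2 / 2) • a)
          (by simp) (fun s => (((hu s).sub_const (u 0)).sub (h_lin (u' 0) s)).sub (h_sq s))
          first_order
    _ = C * t ^ 2 := by rw [mul_assoc, ← sq, sq_abs]

theorem flow_sub_second_order_isBigO {F G : ℝ × E → E} {u : ℝ → ℝ → E} {x : E}
    {L : NNReal} {S : Set (ℝ × E)} (hF : ContinuousAt F (0, x)) (hG : LipschitzOnWith L G S)
    (hS : S ∈ 𝓝 (0, x)) (hu0 : ∀ h, u h 0 = x)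
    (hu : ∀ h t, HasDerivAt (u h) (F (h, u h t)) t)
    (hu' : ∀ h t, HasDerivAt (fun s => F (h, u h s)) (G (h, u h t)) t) :
    (fun h => u h h - x - h • F (h, x) - (h ^ 2 / 2) • G (0, x)) =O[𝓝 0] fun h => h ^ 3 := by
  set M := ‖F (0, x)‖ + 1
  have hM : 0 < M := by positivity
  obtain ⟨r, hr, hrS⟩ : ∃ r > 0, closedBall (0, x) r ⊆ S ∩ {p | ‖F p‖ < M} :=
    nhds_basis_closedBall.mem_iff.1
      (inter_mem hS (hF.norm.eventually (gt_mem_nhds (lt_add_one _))))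
  refine isBigO_iff.2 ⟨L * (1 + M), ?_⟩
  filter_upwards [closedBall_mem_nhds (0 : ℝ) (lt_min hr (div_pos hr hM))] with h h_small
  have hh : |h| ≤ r ∧ M * |h| ≤ r := by
    rw [mem_closedBall, Real.dist_0_eq_abs, le_min_iff, le_div_iff₀ hM] at h_small
    exact ⟨h_small.1, by linarith⟩
  have h_mem : ∀ y ∈ closedBall x r, (h, y) ∈ closedBall (0, x) r := fun y hy => by
    rw [← closedBall_prod_same]
    exact ⟨by simpa using hh.1, hy⟩
  have h_stay : ∀ s, |s| ≤ |h| → ‖u h s - x‖ ≤ M * |h| := fun s hs =>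
    (norm_sub_le_mul_abs_of_hasDerivAt (g := fun y => F (h, y)) (hu0 h) (hu h)
      (fun y hy => (hrS (h_mem y hy)).2) hM.le
      ((by gcongr : M * |s| ≤ M * |h|).trans hh.2)).trans (by gcongr)
  have h_near : ∀ s, |s| ≤ |h| → (h, u h s) ∈ S ∧ dist (h, u h s) (0, x) ≤ (1 + M) * |h| :=
    fun s hs => ⟨(hrS (h_mem _ (mem_closedBall_iff_norm.2 ((h_stay s hs).trans hh.2)))).1, by
      rw [Prod.dist_eq, Real.dist_0_eq_abs, dist_eq_norm]
      exact max_le (by nlinarith [abs_nonneg h]) (by linarith [h_stay s hs, abs_nonneg h])⟩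
  calc ‖u h h - x - h • F (h, x) - (h ^ 2 / 2) • G (0, x)‖
      = ‖u h h - u h 0 - h • F (h, u h 0) - (h ^ 2 / 2) • G (0, x)‖ := by rw [hu0]
    _ ≤ L * ((1 + M) * |h|) * h ^ 2 :=
        norm_sub_second_order_taylor_le (hu h) (hu' h) fun s hs => by
          rw [← dist_eq_norm]
          exact (hG.dist_le_mul _ (h_near s hs).1 _ (mem_of_mem_nhds hS)).trans
            (by gcongr; exact (h_near s hs).2)
    _ = L * (1 + M) * ‖h ^ 3‖ := by
        rw [norm_pow, Real.norm_eq_abs, ← sq_abs]; ring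

end FlowEstimates

/-- First-order modified equation for Euler's method: with
`f̃_h(x) = f(x) - (h/2) ∂_x f(x)[f(x)]` and `ψ h t x` the time-`t` flow of
`dx/dt = f̃_h(x)` (with `h` a fixed parameter), one has
`ψ h h x - (x + h f(x)) = O(h³)` as `h → 0`, for each `x`. -/
theorem euler_modified_equation {D : ℕ}
    (f : EuclideanSpace ℝ (Fin D) → EuclideanSpace ℝ (Fin D))
    (hf : ContDiff ℝ 3 f)
    (ftilde : ℝ → EuclideanSpace ℝ (Fin D) → EuclideanSpace ℝ (Fin D))
    (hft : ∀ h x, ftilde h x = f x - (h / 2) • fderiv ℝ f x (f x))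
    (ψ : ℝ → ℝ → EuclideanSpace ℝ (Fin D) → EuclideanSpace ℝ (Fin D))
    (hψ0 : ∀ h x, ψ h 0 x = x)
    (hψ : ∀ h t x, HasDerivAt (fun s => ψ h s x) (ftilde h (ψ h t x)) t)
    (x : EuclideanSpace ℝ (Fin D)) :
    (fun h : ℝ => ψ h h x - (x + h • f x)) =O[nhds 0] (fun h : ℝ => h ^ 3) := by
  set q := fun y => fderiv ℝ f y (f y)
  have hq : ContDiff ℝ 2 q :=
    (hf.fderiv_right (by norm_num)).clm_apply (hf.of_le (by norm_num))
  have hftilde : ∀ h, ftilde h = fun y => f y - (h / 2) • q y := fun h => funext (hft h)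
  set F := fun p : ℝ × EuclideanSpace ℝ (Fin D) => ftilde p.1 p.2
  set F' := fun p : ℝ × EuclideanSpace ℝ (Fin D) =>
    fderiv ℝ f p.2 - (p.1 / 2) • fderiv ℝ q p.2
  have hF : ContDiff ℝ 1 F := by
    simp only [F, hftilde]
    exact ((hf.of_le (by norm_num)).comp contDiff_snd).sub
      ((contDiff_fst.div_const 2).smul ((hq.of_le (by norm_num)).comp contDiff_snd))
  have hF' : ContDiff ℝ 1 F' :=
    ((hf.fderiv_right (m := 2) (by norm_num)).of_le (by norm_num) |>.comp contDiff_snd).sub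
      ((contDiff_fst.div_const 2).smul
        ((hq.fderiv_right (m := 1) (by norm_num)).comp contDiff_snd))
  have hF_deriv : ∀ h y, HasFDerivAt (ftilde h) (F' (h, y)) y := fun h y => by
    rw [hftilde]
    exact ((hf.differentiable (by norm_num) y).hasFDerivAt).sub
      (((hq.differentiable (by norm_num) y).hasFDerivAt).const_smul (h / 2))
  have hG0 : F' (0, x) (F (0, x)) = q x := by simp [F, F', hftilde, q]
  obtain ⟨L, S, hS, hG⟩ := (hF'.clm_apply hF).contDiffAt (x := (0, x)).exists_lipschitzOnWith
  refine (flow_sub_second_order_isBigO hF.continuous.continuousAt hG hS (fun h => hψ0 h x)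
    (fun h t => hψ h t x) (fun h t => (hF_deriv h _).comp_hasDerivAt t (hψ h t x))).congr_left
    fun h => ?_
  rw [hG0]
  simp only [F, hftilde]
  module
end

section
/- Splitting-integrator coefficients as a character: for the Lie–Trotter-type splitting with r = 1, a₁ = 1, b₁ = 1 over the alphabet ℤ^d, the family γ(h) ∈ ℂ^𝒲 defined by γ_∅(h) = 1 and γ_{𝐤₁⋯𝐤ₙ}(h) = (hⁿ/n!) exp(i(𝐤₁ + ⋯ + 𝐤ₙ)·ωh) satisfies the shuffle relations for every h ∈ ℝ and every ω ∈ ℝ^d. -/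
/-- Convolution product on `ℂ^𝒲`. -/
noncomputable def conv {A : Type*} (δ δ' : List A → ℂ) (w : List A) : ℂ :=
  ∑ j ∈ Finset.range (w.length + 1), δ (w.take j) * δ' (w.drop j)

/-- The letter-sum of a word over the alphabet `ℤ^d`. -/
def letterSum {d : ℕ} (w : List (Fin d → ℤ)) : Fin d → ℤ :=
  fun i => (w.map (fun k => k i)).sum

/-- The operator `Ξ_u` on `ℂ^𝒲`:
`(Ξ_u δ)_{𝐤₁⋯𝐤ₙ} = exp(i(𝐤₁+⋯+𝐤ₙ)·u) δ_{𝐤₁⋯𝐤ₙ}` (and `(Ξ_u δ)_∅ = δ_∅`). -/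
noncomputable def Xi {d : ℕ} (u : Fin d → ℂ) (δ : List (Fin d → ℤ) → ℂ) :
    List (Fin d → ℤ) → ℂ :=
  fun w => Complex.exp (Complex.I * ∑ i, (letterSum w i : ℂ) * u i) * δ w


/-- Every element of `shuffle w w'` is a permutation of `w ++ w'`. -/
theorem shuffle_perm {A : Type*} : ∀ (w w' u : List A), u ∈ shuffle w w' →
    u.Perm (w ++ w')
  | [], w', u, hu => by
      simp [shuffle] at hu; simp [hu]
  | a :: w, [], u, hu => by
      simp [shuffle] at hu; simp [hu]
  | a :: w, b :: w', u, hu => by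
      simp only [shuffle, Multiset.mem_add, Multiset.mem_map] at hu
      rcases hu with ⟨v, hv, rfl⟩ | ⟨v, hv, rfl⟩
      · exact (shuffle_perm w (b :: w') v hv).cons a
      · exact ((shuffle_perm (a :: w) w' v hv).cons b).trans List.perm_middle.symm

/-- The number of interleavings is a binomial coefficient. -/
theorem card_shuffle {A : Type*} : ∀ (w w' : List A),
    Multiset.card (shuffle w w') = (w.length + w'.length).choose w.length
  | [], w' => by simp [shuffle]
  | a :: w, [] => by simp [shuffle]
  | a :: w, b :: w' => by
      simp only [shuffle, Multiset.card_add, Multiset.card_map,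
        card_shuffle w (b :: w'), card_shuffle (a :: w) w', List.length_cons]
      have e1 : w.length + 1 + (w'.length + 1) = (w.length + w'.length + 1) + 1 := by omega
      have e2 : w.length + (w'.length + 1) = w.length + w'.length + 1 := by omega
      have e3 : w.length + 1 + w'.length = w.length + w'.length + 1 := by omega
      rw [e1, e2, e3]; exact (Nat.choose_succ_succ _ _).symm

/-- The coefficients of the Lie–Trotter splitting integrator (`r = 1`,
`a₁ = b₁ = 1`): `γ_{𝐤₁⋯𝐤ₙ}(h) = (hⁿ/n!) exp(i(𝐤₁+⋯+𝐤ₙ)·ωh)`. -/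
theorem lieTrotter_coeffs_shuffleChar {d : ℕ} (h : ℝ) (ω : Fin d → ℝ) :
    IsShuffleChar (fun w : List (Fin d → ℤ) =>
      ((h : ℂ) ^ w.length / (Nat.factorial w.length : ℂ)) *
        Complex.exp (Complex.I * ∑ i, (letterSum w i : ℂ) * ((h : ℂ) * (ω i : ℂ)))) := by
  constructor
  · simp [letterSum]
  · intro w w'
    set m := w.length with hm
    set n := w'.length with hn
    set A : ℂ := Complex.I * ∑ i, (letterSum w i : ℂ) * ((h : ℂ) * (ω i : ℂ)) with hA
    set B : ℂ := Complex.I * ∑ i, (letterSum w' i : ℂ) * ((h : ℂ) * (ω i : ℂ)) with hB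
    have key : ∀ u ∈ shuffle w w',
        ((h : ℂ) ^ u.length / (Nat.factorial u.length : ℂ)) *
          Complex.exp (Complex.I * ∑ i, (letterSum u i : ℂ) * ((h : ℂ) * (ω i : ℂ)))
        = ((h : ℂ) ^ (m + n) / (Nat.factorial (m + n) : ℂ)) * Complex.exp (A + B) := by
      intro u hu
      have hp := shuffle_perm w w' u hu
      have hl : u.length = m + n := by simpa using hp.length_eq
      have hs : ∀ i, letterSum u i = letterSum w i + letterSum w' i := by
        intro i
        have := (hp.map (fun k => k i)).sum_eq
        simpa [letterSum] using this
      rw [hl]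
      congr 1
      rw [hA, hB, ← mul_add, ← Finset.sum_add_distrib]
      congr 1
      congr 1
      apply Finset.sum_congr rfl
      intro i _
      rw [hs i]
      push_cast
      ring
    rw [Multiset.map_congr rfl key, Multiset.map_const', Multiset.sum_replicate,
      card_shuffle, ← hm, ← hn, Complex.exp_add, nsmul_eq_mul]
    have hC : ((m + n).choose m : ℂ) * (Nat.factorial m : ℂ) * (Nat.factorial n : ℂ)
        = (Nat.factorial (m + n) : ℂ) := by
      have h0 : (m + n).choose m * Nat.factorial m * Nat.factorial n
          = Nat.factorial (m + n) := by
        have := Nat.add_choose_mul_factorial_mul_factorial m n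
        rw [Nat.choose_symm_add] at *
        omega
      exact_mod_cast h0
    have h1 : (Nat.factorial m : ℂ) ≠ 0 := Nat.cast_ne_zero.mpr (Nat.factorial_ne_zero m)
    have h2 : (Nat.factorial n : ℂ) ≠ 0 := Nat.cast_ne_zero.mpr (Nat.factorial_ne_zero n)
    have h3 : (Nat.factorial (m + n) : ℂ) ≠ 0 := Nat.cast_ne_zero.mpr (Nat.factorial_ne_zero _)
    have hfrac : ((h : ℂ) ^ m / (Nat.factorial m : ℂ)) * ((h : ℂ) ^ n / (Nat.factorial n : ℂ))
        = ((m + n).choose m : ℂ) * ((h : ℂ) ^ (m + n) / (Nat.factorial (m + n) : ℂ)) := by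
      rw [pow_add]
      field_simp
      linear_combination (-((h : ℂ) ^ m * (h : ℂ) ^ n)) * hC
    linear_combination (Complex.exp A * Complex.exp B) * hfrac
end
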